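/- (Proposition 2: temporal Fisher information of a Gaussian diffusion path, conditional form.) Let D be a positive integer, x₀ ∈ ℝ^D, and let α, σ : J → ℝ be differentiable on an open interval J with σ(t) > 0. Let f_t(x) = (2π)^{−D/2} σ(t)^{−D} exp(−‖x − α(t)x₀‖²/(2σ(t)²)) be the density of N(α(t)x₀, σ(t)² I_D). Then the temporal Fisher information of the family (f_t) satisfies, for every t ∈ J: I(t; x₀) := ∫_{ℝ^D} f_t(x) (∂_t log f_t(x))² dx = 2D·(σ'(t)/σ(t))² + (α'(t)/σ(t))²·‖x₀‖². -/

import Mathlib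

open MeasureTheory

section FisherAux
open Real

lemma intPG (n : ℕ) : Integrable (fun x : ℝ => x ^ n * Real.exp (-x ^ 2 / 2)) := by
  have hg2 : Integrable (fun x : ℝ => Real.exp (-(1/2 : ℝ) * x ^ 2)) :=
    integrable_exp_neg_mul_sq (by norm_num)
  have hg4 : Integrable (fun x : ℝ => Real.exp (-(1/4 : ℝ) * x ^ 2)) :=
    integrable_exp_neg_mul_sq (by norm_num)
  have hbd : ∀ x : ℝ, ‖x ^ n * Real.exp (-x ^ 2 / 2)‖ ≤
      Real.exp (-(1/2 : ℝ) * x ^ 2) + (4 ^ n * n.factorial) * Real.exp (-(1/4 : ℝ) * x ^ 2) := by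
    intro x
    have hxn : |x ^ n| ≤ 1 + x ^ (2 * n) := by
      rcases le_or_gt (|x|) 1 with h | h
      · calc |x ^ n| = |x| ^ n := by rw [abs_pow]
          _ ≤ 1 := pow_le_one₀ (abs_nonneg x) h
          _ ≤ 1 + x ^ (2 * n) := by
              have : (0:ℝ) ≤ x ^ (2*n) := by rw [pow_mul]; positivity
              linarith
      · have : |x ^ n| = |x| ^ n := abs_pow x n
        have h2 : |x| ^ n ≤ |x| ^ (2 * n) := pow_le_pow_right₀ h.le (by omega)
        have : x ^ (2 * n) = |x| ^ (2 * n) := by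
          rw [← abs_pow]
          rw [abs_of_nonneg (by rw [pow_mul]; positivity)]
        nlinarith [abs_nonneg (x ^ n), pow_nonneg (abs_nonneg x) n]
    have hpow : x ^ (2 * n) ≤ 4 ^ n * n.factorial * Real.exp (x ^ 2 / 4) := by
      have h1 : (x ^ 2 / 4) ^ n / n.factorial ≤ Real.exp (x ^ 2 / 4) := by
        calc (x ^ 2 / 4) ^ n / n.factorial
            ≤ ∑ i ∈ Finset.range (n + 1), (x ^ 2 / 4) ^ i / i.factorial := by
              refine Finset.single_le_sum (f := fun i => (x ^ 2 / 4) ^ i / i.factorial)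
                (fun i _ => by positivity) (Finset.self_mem_range_succ n)
          _ ≤ Real.exp (x ^ 2 / 4) := Real.sum_le_exp_of_nonneg (by positivity) _
      have h2 : (x ^ 2 / 4) ^ n = x ^ (2 * n) / 4 ^ n := by
        rw [div_pow, pow_mul]
      have hf : (0:ℝ) < n.factorial := by exact_mod_cast n.factorial_pos
      rw [h2] at h1
      have := (div_le_iff₀ hf).mp h1
      calc x ^ (2*n) = (x ^ (2*n) / 4 ^ n) * 4 ^ n := by field_simp
        _ ≤ (Real.exp (x^2/4) * n.factorial) * 4 ^ n := by
            apply mul_le_mul_of_nonneg_right this (by positivity)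
        _ = 4 ^ n * n.factorial * Real.exp (x ^ 2 / 4) := by ring
    have hexp : Real.exp (-x ^ 2 / 2) = Real.exp (-(1/2 : ℝ) * x ^ 2) := by ring_nf
    have hexp2 : Real.exp (x ^ 2 / 4) * Real.exp (-x ^ 2 / 2) = Real.exp (-(1/4:ℝ) * x ^ 2) := by
      rw [← Real.exp_add]; ring_nf
    have hepos : 0 < Real.exp (-x ^ 2 / 2) := Real.exp_pos _
    calc ‖x ^ n * Real.exp (-x ^ 2 / 2)‖ = |x ^ n| * Real.exp (-x ^ 2 / 2) := by
          rw [norm_mul, Real.norm_eq_abs, Real.norm_eq_abs, abs_of_pos hepos]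
      _ ≤ (1 + x ^ (2*n)) * Real.exp (-x ^ 2 / 2) := by
          apply mul_le_mul_of_nonneg_right hxn hepos.le
      _ ≤ (1 + 4 ^ n * n.factorial * Real.exp (x ^ 2 / 4)) * Real.exp (-x ^ 2 / 2) := by
          apply mul_le_mul_of_nonneg_right _ hepos.le
          linarith
      _ = Real.exp (-(1/2 : ℝ) * x ^ 2) + (4 ^ n * n.factorial) *
            (Real.exp (x ^ 2 / 4) * Real.exp (-x ^ 2 / 2)) := by rw [← hexp]; ring
      _ = _ := by rw [hexp2]
  refine Integrable.mono' (hg2.add ((hg4.const_mul _))) ?_ (Filter.Eventually.of_forall hbd)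
  exact (continuous_pow n |>.mul (by continuity)).aestronglyMeasurable

lemma gmom0 : ∫ x : ℝ, Real.exp (-x ^ 2 / 2) = Real.sqrt (2 * Real.pi) := by
  have := integral_gaussian (1/2 : ℝ)
  simp only [div_div_eq_mul_div, one_div] at this
  calc ∫ x : ℝ, Real.exp (-x ^ 2 / 2) = ∫ x : ℝ, Real.exp (-(1/2:ℝ) * x ^ 2) := by
        congr 1; ext x; ring_nf
    _ = Real.sqrt (Real.pi / (1/2)) := integral_gaussian _
    _ = Real.sqrt (2 * Real.pi) := by norm_num [mul_comm]

lemma gderiv_zero (P P' : ℝ → ℝ) (hP : ∀ x, HasDerivAt P (P' x) x)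
    (hint : Integrable (fun x => (P' x - P x * x) * Real.exp (-x ^ 2 / 2)))
    (hint2 : Integrable (fun x => P x * Real.exp (-x ^ 2 / 2))) :
    ∫ x : ℝ, (P' x - P x * x) * Real.exp (-x ^ 2 / 2) = 0 := by
  apply integral_eq_zero_of_hasDerivAt_of_integrable
    (f := fun x => P x * Real.exp (-x ^ 2 / 2)) _ hint hint2
  intro x
  have h1 : HasDerivAt (fun x : ℝ => -x ^ 2 / 2) (-x) x := by
    have := ((hasDerivAt_pow 2 x).neg).div_const 2
    simpa using this.congr_deriv (by ring)
  have h2 : HasDerivAt (fun x : ℝ => Real.exp (-x ^ 2 / 2)) (Real.exp (-x^2/2) * (-x)) x :=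
    (h1.exp)
  have := (hP x).mul h2
  exact this.congr_deriv (by ring)

lemma gmom1 : ∫ x : ℝ, x * Real.exp (-x ^ 2 / 2) = 0 := by
  have h := gderiv_zero (fun _ => -1) (fun _ => 0) (fun x => hasDerivAt_const x (-1)) ?_ ?_
  · calc ∫ x : ℝ, x * Real.exp (-x ^ 2 / 2)
        = ∫ x : ℝ, (0 - (-1) * x) * Real.exp (-x ^ 2 / 2) := by congr 1; ext x; ring
      _ = 0 := h
  · convert intPG 1 using 2 with x; ring
  · have h0 := (intPG 0).neg
    refine h0.congr (Filter.Eventually.of_forall fun x => ?_)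
    simp

lemma gmom2 : ∫ x : ℝ, x ^ 2 * Real.exp (-x ^ 2 / 2) = Real.sqrt (2 * Real.pi) := by
  have h := gderiv_zero (fun x => x) (fun _ => 1) (fun x => hasDerivAt_id x)
    (((intPG 0).sub (intPG 2)).congr (Filter.Eventually.of_forall fun x => by simp only [Pi.sub_apply, Pi.add_apply, Pi.neg_apply]; try ring))
    ((intPG 1).congr (Filter.Eventually.of_forall fun x => by simp only [Pi.sub_apply, Pi.add_apply, Pi.neg_apply]; try ring))
  have hsplit : ∫ x : ℝ, (1 - x * x) * Real.exp (-x ^ 2 / 2)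
      = (∫ x : ℝ, Real.exp (-x ^ 2 / 2)) - ∫ x : ℝ, x ^ 2 * Real.exp (-x ^ 2 / 2) := by
    rw [← integral_sub ((intPG 0).congr (Filter.Eventually.of_forall fun x => by simp only [Pi.sub_apply, Pi.add_apply, Pi.neg_apply]; try ring))
      (intPG 2)]
    congr 1; ext x; ring
  rw [h] at hsplit
  rw [gmom0] at hsplit
  linarith

lemma gmom3 : ∫ x : ℝ, x ^ 3 * Real.exp (-x ^ 2 / 2) = 0 := by
  have h := gderiv_zero (fun x => x ^ 2 + 2) (fun x => 2 * x)
    (fun x => by simpa using ((hasDerivAt_pow 2 x).add_const 2))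
    (((intPG 3).neg).congr (Filter.Eventually.of_forall fun x => by simp only [Pi.sub_apply, Pi.add_apply, Pi.neg_apply]; try ring))
    (((intPG 2).add ((intPG 0).const_mul 2)).congr (Filter.Eventually.of_forall fun x => by simp only [Pi.sub_apply, Pi.add_apply, Pi.neg_apply]; try ring))
  have : ∫ x : ℝ, (2 * x - (x ^ 2 + 2) * x) * Real.exp (-x ^ 2 / 2)
      = - ∫ x : ℝ, x ^ 3 * Real.exp (-x ^ 2 / 2) := by
    rw [← integral_neg]; congr 1; ext x; ring
  rw [h] at this
  linarith

lemma gmom4 : ∫ x : ℝ, x ^ 4 * Real.exp (-x ^ 2 / 2) = 3 * Real.sqrt (2 * Real.pi) := by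
  have h := gderiv_zero (fun x => x ^ 3) (fun x => 3 * x ^ 2)
    (fun x => by simpa using (hasDerivAt_pow 3 x))
    ((((intPG 2).const_mul 3).sub (intPG 4)).congr (Filter.Eventually.of_forall fun x => by simp only [Pi.sub_apply, Pi.add_apply, Pi.neg_apply]; try ring))
    ((intPG 3).congr (Filter.Eventually.of_forall fun x => by simp only [Pi.sub_apply, Pi.add_apply, Pi.neg_apply]; try ring))
  have hsplit : ∫ x : ℝ, (3 * x ^ 2 - x ^ 3 * x) * Real.exp (-x ^ 2 / 2)
      = 3 * (∫ x : ℝ, x ^ 2 * Real.exp (-x ^ 2 / 2)) - ∫ x : ℝ, x ^ 4 * Real.exp (-x ^ 2 / 2) := by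
    rw [← integral_const_mul, ← integral_sub ((intPG 2).const_mul 3) (intPG 4)]
    congr 1; ext x; ring
  rw [h, gmom2] at hsplit
  linarith

lemma int_poly4 (a0 a1 a2 a3 a4 : ℝ) :
    Integrable (fun x : ℝ =>
      (a4 * x ^ 4 + a3 * x ^ 3 + a2 * x ^ 2 + a1 * x + a0) * Real.exp (-x ^ 2 / 2)) := by
  have h := (((((intPG 4).const_mul a4).add ((intPG 3).const_mul a3)).add
    ((intPG 2).const_mul a2)).add ((intPG 1).const_mul a1)).add ((intPG 0).const_mul a0)
  refine h.congr (Filter.Eventually.of_forall fun x => ?_)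
  simp only [Pi.add_apply]; ring

lemma val_poly4 (a0 a1 a2 a3 a4 : ℝ) :
    ∫ x : ℝ, (a4 * x ^ 4 + a3 * x ^ 3 + a2 * x ^ 2 + a1 * x + a0) * Real.exp (-x ^ 2 / 2)
      = (3 * a4 + a2 + a0) * Real.sqrt (2 * Real.pi) := by
  have key : ∀ (c : ℝ) (n : ℕ), ∫ x : ℝ, c * (x ^ n * Real.exp (-x ^ 2 / 2))
      = c * ∫ x : ℝ, x ^ n * Real.exp (-x ^ 2 / 2) := fun c n => integral_const_mul c _
  set e : ℝ → ℝ := fun x => Real.exp (-x ^ 2 / 2) with he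
  let coef : Fin 5 → ℝ := ![a0, a1, a2, a3, a4]
  have hfun : (fun x : ℝ => (a4 * x ^ 4 + a3 * x ^ 3 + a2 * x ^ 2 + a1 * x + a0) * e x)
      = fun x : ℝ => ∑ i : Fin 5, coef i * (x ^ (i : ℕ) * e x) := by
    funext x
    simp only [Fin.sum_univ_five, coef]
    simp only [show ((0:Fin 5):ℕ) = 0 from rfl, show ((1:Fin 5):ℕ) = 1 from rfl, show ((2:Fin 5):ℕ) = 2 from rfl, show ((3:Fin 5):ℕ) = 3 from rfl, show ((4:Fin 5):ℕ) = 4 from rfl]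
    simp [Fin.isValue]
    ring
  calc ∫ x : ℝ, (a4 * x ^ 4 + a3 * x ^ 3 + a2 * x ^ 2 + a1 * x + a0) * e x
      = ∫ x : ℝ, ∑ i : Fin 5, coef i * (x ^ (i : ℕ) * e x) := by rw [hfun]
    _ = ∑ i : Fin 5, ∫ x : ℝ, coef i * (x ^ (i : ℕ) * e x) :=
        integral_finset_sum _ (fun i _ => (intPG (i : ℕ)).const_mul (coef i))
    _ = ∑ i : Fin 5, coef i * ∫ x : ℝ, x ^ (i : ℕ) * e x := by
        exact Finset.sum_congr rfl fun i _ => key (coef i) i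
    _ = (3 * a4 + a2 + a0) * Real.sqrt (2 * Real.pi) := by
        simp only [Fin.sum_univ_five, coef]
        simp only [Fin.isValue, Matrix.cons_val_zero, Matrix.cons_val_one, Matrix.head_cons,
          Matrix.cons_val_two, Matrix.tail_cons, Matrix.cons_val_three, Matrix.cons_val_four]
        simp only [show ((0:Fin 5):ℕ) = 0 from rfl, show ((1:Fin 5):ℕ) = 1 from rfl, show ((2:Fin 5):ℕ) = 2 from rfl, show ((3:Fin 5):ℕ) = 3 from rfl, show ((4:Fin 5):ℕ) = 4 from rfl]
        simp only [he, pow_zero, one_mul, pow_one]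
        rw [gmom0, gmom1, gmom2, gmom3, gmom4]
        ring

lemma pi_core (D : ℕ) (hD : 0 < D) (c : Fin D → ℝ) (A B : ℝ) :
    ∫ v : Fin D → ℝ, (∏ k, Real.exp (-(v k) ^ 2 / 2)) *
        (∑ i, (A * ((v i) ^ 2 - 1) + B * c i * v i)) ^ 2
      = (∑ i, (2 * A ^ 2 + B ^ 2 * (c i) ^ 2)) * Real.sqrt (2 * Real.pi) ^ D := by
  set g : ℝ → ℝ := fun x => Real.exp (-x ^ 2 / 2) with hg
  set h : Fin D → ℝ → ℝ := fun i x => A * (x ^ 2 - 1) + B * c i * x with hh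
  set w : Fin D → Fin D → Fin D → ℝ → ℝ :=
    fun i j k x => g x * ((if k = i then h i x else 1) * (if k = j then h j x else 1)) with hw
  have Ig : Integrable g := by
    have := intPG 0
    simpa using this
  have Igh : ∀ i, Integrable (fun x => g x * h i x) := fun i =>
    (int_poly4 (-A) (B * c i) A 0 0).congr
      (Filter.Eventually.of_forall fun x => by simp only [hg, hh]; ring)
  have Ighh : ∀ i j, Integrable (fun x => g x * (h i x * h j x)) := fun i j =>
    (int_poly4 (A ^ 2) (-(A * B * (c i + c j))) (B ^ 2 * c i * c j - 2 * A ^ 2)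
        (A * B * (c i + c j)) (A ^ 2)).congr
      (Filter.Eventually.of_forall fun x => by simp only [hg, hh]; ring)
  have Vg : ∫ x, g x = Real.sqrt (2 * Real.pi) := gmom0
  have Vgh : ∀ i, ∫ x, g x * h i x = 0 := by
    intro i
    have := val_poly4 (-A) (B * c i) A 0 0
    rw [show ∫ x, g x * h i x = ∫ x : ℝ,
        (0 * x ^ 4 + 0 * x ^ 3 + A * x ^ 2 + B * c i * x + -A) * Real.exp (-x ^ 2 / 2) by
      congr 1; ext x; simp only [hg, hh]; ring]
    rw [val_poly4]; ring
  have Vghh : ∀ i, ∫ x, g x * (h i x * h i x)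
      = (2 * A ^ 2 + B ^ 2 * (c i) ^ 2) * Real.sqrt (2 * Real.pi) := by
    intro i
    rw [show ∫ x, g x * (h i x * h i x) = ∫ x : ℝ,
        (A ^ 2 * x ^ 4 + (A * B * (c i + c i)) * x ^ 3
          + (B ^ 2 * c i * c i - 2 * A ^ 2) * x ^ 2
          + (-(A * B * (c i + c i))) * x + A ^ 2) * Real.exp (-x ^ 2 / 2) by
      congr 1; ext x; simp only [hg, hh]; ring]
    rw [val_poly4]; ring
  have Iw : ∀ i j k, Integrable (w i j k) := by
    intro i j k
    by_cases hki : k = i <;> by_cases hkj : k = j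
    · subst hki; subst hkj
      simpa [hw] using Ighh k k
    · subst hki
      simpa [hw, hkj] using Igh k
    · subst hkj
      have := Igh k
      refine this.congr (Filter.Eventually.of_forall fun x => ?_)
      simp [hw, hki, mul_comm]
    · simpa [hw, hki, hkj] using Ig
  have hwprod : ∀ i j (v : Fin D → ℝ),
      (∏ k, g (v k)) * (h i (v i) * h j (v j)) = ∏ k, w i j k (v k) := by
    intro i j v
    simp only [hw, Finset.prod_mul_distrib]
    rw [Finset.prod_ite_eq' Finset.univ i (fun k => h i (v k)),
      Finset.prod_ite_eq' Finset.univ j (fun k => h j (v k))]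
    simp [mul_assoc]
  have hTval : ∀ i j, (∫ v : Fin D → ℝ, ∏ k, w i j k (v k))
      = if j = i then (2 * A ^ 2 + B ^ 2 * (c i) ^ 2) * Real.sqrt (2 * Real.pi) ^ D else 0 := by
    intro i j
    rw [MeasureTheory.integral_fintype_prod_volume_eq_prod (f := fun k x => w i j k x)]
    by_cases hij : j = i
    · subst hij
      rw [if_pos rfl, ← Finset.mul_prod_erase Finset.univ _ (Finset.mem_univ j)]
      have h1 : ∫ x, w j j j x = (2 * A ^ 2 + B ^ 2 * (c j) ^ 2) * Real.sqrt (2 * Real.pi) := by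
        rw [← Vghh j]; congr 1; ext x; simp [hw]
      have h2 : ∏ k ∈ Finset.univ.erase j, ∫ x, w j j k x
          = Real.sqrt (2 * Real.pi) ^ (D - 1) := by
        rw [Finset.prod_congr rfl (fun k hk => ?_), Finset.prod_const,
          Finset.card_erase_of_mem (Finset.mem_univ j), Finset.card_univ, Fintype.card_fin]
        have hkj : k ≠ j := Finset.ne_of_mem_erase hk
        rw [← Vg]; congr 1; ext x; simp [hw, hkj]
      rw [h1, h2, mul_assoc, ← pow_succ']
      congr 2
      omega
    · rw [if_neg hij]
      apply Finset.prod_eq_zero (Finset.mem_univ i)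
      rw [← Vgh i]; congr 1; ext x
      have : i ≠ j := fun hc => hij hc.symm
      simp [hw, this]
  calc ∫ v : Fin D → ℝ, (∏ k, g (v k)) * (∑ i, h i (v i)) ^ 2
      = ∫ v : Fin D → ℝ, ∑ i, ∑ j, ∏ k, w i j k (v k) := by
        congr 1; ext v
        rw [sq, Finset.sum_mul_sum, Finset.mul_sum]
        refine Finset.sum_congr rfl fun i _ => ?_
        rw [Finset.mul_sum]
        exact Finset.sum_congr rfl fun j _ => hwprod i j v
    _ = ∑ i, ∑ j, ∫ v : Fin D → ℝ, ∏ k, w i j k (v k) := by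
        rw [integral_finset_sum (μ := volume) _ (fun i _ => integrable_finset_sum _ (fun j _ =>
          Integrable.fintype_prod (fun k => Iw i j k)))]
        exact Finset.sum_congr rfl fun i _ =>
          integral_finset_sum (μ := volume) _ (fun j _ => Integrable.fintype_prod (fun k => Iw i j k))
    _ = ∑ i, ((2 * A ^ 2 + B ^ 2 * (c i) ^ 2) * Real.sqrt (2 * Real.pi) ^ D) := by
        refine Finset.sum_congr rfl fun i _ => ?_
        rw [Finset.sum_congr rfl (fun j _ => hTval i j), Finset.sum_ite_eq' Finset.univ i]
        simp
    _ = (∑ i, (2 * A ^ 2 + B ^ 2 * (c i) ^ 2)) * Real.sqrt (2 * Real.pi) ^ D := by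
        rw [← Finset.sum_mul]

lemma euclid_core (D : ℕ) (hD : 0 < D) (w : EuclideanSpace ℝ (Fin D)) (A B : ℝ) :
    ∫ z : EuclideanSpace ℝ (Fin D),
        Real.exp (-‖z‖ ^ 2 / 2) * (A * (‖z‖ ^ 2 - D) + B * (inner ℝ w z : ℝ)) ^ 2
      = (2 * D * A ^ 2 + B ^ 2 * ‖w‖ ^ 2) * Real.sqrt (2 * Real.pi) ^ D := by
  have hmp := (EuclideanSpace.volume_preserving_symm_measurableEquiv_toLp (Fin D)).symm
  rw [← hmp.integral_comp (MeasurableEquiv.measurableEmbedding _)]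
  have hnorm : ∀ v : Fin D → ℝ,
      ‖(MeasurableEquiv.toLp 2 (Fin D → ℝ)).symm.symm v‖ ^ 2 = ∑ i, (v i) ^ 2 := by
    intro v
    rw [EuclideanSpace.norm_eq, Real.sq_sqrt (Finset.sum_nonneg fun i _ => by positivity)]
    simp [MeasurableEquiv.toLp_apply, sq_abs]
  have hinner : ∀ v : Fin D → ℝ,
      (inner ℝ w ((MeasurableEquiv.toLp 2 (Fin D → ℝ)).symm.symm v) : ℝ) = ∑ i, w i * v i := by
    intro v
    simp [MeasurableEquiv.toLp_apply, PiLp.inner_apply, RCLike.inner_apply, mul_comm]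
  have hsum : ∀ v : Fin D → ℝ,
      A * ((∑ i, (v i) ^ 2) - D) + B * (∑ i, w i * v i)
        = ∑ i, (A * ((v i) ^ 2 - 1) + B * w i * v i) := by
    intro v
    rw [Finset.sum_add_distrib]
    simp only [mul_sub, Finset.mul_sum, Finset.sum_sub_distrib, Finset.sum_const,
      Finset.card_univ, Fintype.card_fin, nsmul_eq_mul, mul_one]
    ring_nf
  have hexp : ∀ v : Fin D → ℝ,
      Real.exp (-(∑ i, (v i) ^ 2) / 2) = ∏ i, Real.exp (-(v i) ^ 2 / 2) := by
    intro v
    rw [← Real.exp_sum]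
    congr 1
    rw [← Finset.sum_neg_distrib, ← Finset.sum_div]
  have hrw : (fun v : Fin D → ℝ =>
      Real.exp (-‖(MeasurableEquiv.toLp 2 (Fin D → ℝ)).symm.symm v‖ ^ 2 / 2) *
        (A * (‖(MeasurableEquiv.toLp 2 (Fin D → ℝ)).symm.symm v‖ ^ 2 - D)
          + B * (inner ℝ w ((MeasurableEquiv.toLp 2 (Fin D → ℝ)).symm.symm v) : ℝ)) ^ 2)
      = fun v : Fin D → ℝ => (∏ k, Real.exp (-(v k) ^ 2 / 2)) *
          (∑ i, (A * ((v i) ^ 2 - 1) + B * w i * v i)) ^ 2 := by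
    funext v
    rw [hnorm, hinner, hexp, hsum]
  rw [show (fun v : Fin D → ℝ => (fun z : EuclideanSpace ℝ (Fin D) =>
      Real.exp (-‖z‖ ^ 2 / 2) * (A * (‖z‖ ^ 2 - D) + B * (inner ℝ w z : ℝ)) ^ 2)
        ((MeasurableEquiv.toLp 2 (Fin D → ℝ)).symm.symm v)) = _ from hrw]
  rw [pi_core D hD (fun i => w i) A B]
  congr 1
  rw [Finset.sum_add_distrib, Finset.sum_const, Finset.card_univ, Fintype.card_fin,
    nsmul_eq_mul, ← Finset.mul_sum]
  have : ‖w‖ ^ 2 = ∑ i, (w i) ^ 2 := by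
    rw [EuclideanSpace.norm_eq, Real.sq_sqrt (Finset.sum_nonneg fun i _ => by positivity)]
    simp [sq_abs]
  rw [this]
  ring

end FisherAux

/-- Proposition 2, conditional form: the temporal Fisher information of the
Gaussian diffusion path `f t = N(α(t)x₀, σ(t)² I_D)` is
`I(t; x₀) = ∫ fₜ (∂ₜ log fₜ)² = 2D(σ'(t)/σ(t))² + (α'(t)/σ(t))²‖x₀‖²`. -/
theorem gaussian_temporal_fisher_information (D : ℕ) (hD : 0 < D)
    (x₀ : EuclideanSpace ℝ (Fin D)) (a b : ℝ) (hab : a < b) (α σ : ℝ → ℝ)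
    (hα : ∀ s ∈ Set.Ioo a b, DifferentiableAt ℝ α s)
    (hσ : ∀ s ∈ Set.Ioo a b, DifferentiableAt ℝ σ s)
    (hσpos : ∀ s ∈ Set.Ioo a b, 0 < σ s)
    (f : ℝ → EuclideanSpace ℝ (Fin D) → ℝ)
    (hf : ∀ s y, f s y = (2 * Real.pi) ^ (-(D : ℝ) / 2) * (σ s) ^ (-(D : ℝ)) *
      Real.exp (-‖y - α s • x₀‖ ^ 2 / (2 * (σ s) ^ 2)))
    (t : ℝ) (ht : t ∈ Set.Ioo a b) :
    (∫ x, f t x * (deriv (fun s => Real.log (f s x)) t) ^ 2) =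
      2 * D * (deriv σ t / σ t) ^ 2 + (deriv α t / σ t) ^ 2 * ‖x₀‖ ^ 2 := by
  have hs0 : 0 < σ t := hσpos t ht
  have hσ' : HasDerivAt σ (deriv σ t) t := (hσ t ht).hasDerivAt
  have hα' : HasDerivAt α (deriv α t) t := (hα t ht).hasDerivAt
  -- expansion of the squared norm
  have hexpand : ∀ (x : EuclideanSpace ℝ (Fin D)) (r : ℝ),
      ‖x - r • x₀‖ ^ 2 = ‖x‖ ^ 2 - 2 * r * (inner ℝ x₀ x : ℝ) + r ^ 2 * ‖x₀‖ ^ 2 := by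
    intro x r
    rw [norm_sub_sq_real, real_inner_smul_right, norm_smul]
    rw [real_inner_comm]
    simp [mul_pow, sq_abs]
    ring
  -- Step 1 : pointwise derivative
  have hL : ∀ x : EuclideanSpace ℝ (Fin D), deriv (fun s => Real.log (f s x)) t =
      deriv α t * ((inner ℝ x₀ x : ℝ) - α t * ‖x₀‖ ^ 2) / (σ t) ^ 2
        + deriv σ t * (‖x‖ ^ 2 - 2 * α t * (inner ℝ x₀ x : ℝ) + (α t) ^ 2 * ‖x₀‖ ^ 2) / (σ t) ^ 3
        - D * (deriv σ t / σ t) := by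
    intro x
    set P : ℝ := (inner ℝ x₀ x : ℝ) with hP
    have hev : (fun s => Real.log (f s x)) =ᶠ[nhds t] fun s =>
        (-(D : ℝ) / 2) * Real.log (2 * Real.pi) + (-(D : ℝ)) * Real.log (σ s)
          + (-(‖x‖ ^ 2 - 2 * α s * P + (α s) ^ 2 * ‖x₀‖ ^ 2) / (2 * (σ s) ^ 2)) := by
      filter_upwards [Ioo_mem_nhds ht.1 ht.2] with s hs
      have hσs : 0 < σ s := hσpos s hs
      have h2π : (0:ℝ) < 2 * Real.pi := by positivity
      rw [hf, Real.log_mul (by positivity) (Real.exp_ne_zero _),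
        Real.log_mul (by positivity) (by positivity),
        Real.log_rpow h2π, Real.log_rpow hσs, Real.log_exp, hexpand x (α s)]
    rw [hev.deriv_eq]
    have hN : HasDerivAt (fun s => ‖x‖ ^ 2 - 2 * α s * P + (α s) ^ 2 * ‖x₀‖ ^ 2)
        (-(2 * deriv α t * P) + 2 * α t * deriv α t * ‖x₀‖ ^ 2) t := by
      have c1 : HasDerivAt (fun s => 2 * α s * P) (2 * deriv α t * P) t :=
        (hα'.const_mul 2).mul_const P
      have c2 : HasDerivAt (fun s => (α s) ^ 2 * ‖x₀‖ ^ 2)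
          ((2 * α t * deriv α t) * ‖x₀‖ ^ 2) t := by
        have := (hα'.pow 2).mul_const (‖x₀‖ ^ 2)
        simpa [mul_comm, mul_assoc, mul_left_comm] using this
      have := ((hasDerivAt_const t (‖x‖ ^ 2)).sub c1).add c2
      exact this.congr_deriv (by ring)
    have hden : HasDerivAt (fun s => 2 * (σ s) ^ 2) (2 * (2 * σ t * deriv σ t)) t := by
      have := (hσ'.pow 2).const_mul 2
      exact this.congr_deriv (by ring)
    have hfrac : HasDerivAt
        (fun s => -(‖x‖ ^ 2 - 2 * α s * P + (α s) ^ 2 * ‖x₀‖ ^ 2) / (2 * (σ s) ^ 2))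
        ((-(-(2 * deriv α t * P) + 2 * α t * deriv α t * ‖x₀‖ ^ 2) * (2 * (σ t) ^ 2)
          - (-(‖x‖ ^ 2 - 2 * α t * P + (α t) ^ 2 * ‖x₀‖ ^ 2)) * (2 * (2 * σ t * deriv σ t)))
          / (2 * (σ t) ^ 2) ^ 2) t := hN.neg.div hden (by positivity)
    have hlog : HasDerivAt (fun s => (-(D : ℝ)) * Real.log (σ s))
        ((-(D : ℝ)) * (deriv σ t / σ t)) t := (hσ'.log hs0.ne').const_mul _
    have htot := ((hasDerivAt_const t ((-(D : ℝ) / 2) * Real.log (2 * Real.pi))).add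
      hlog).add hfrac
    refine htot.deriv.trans ?_
    field_simp
    ring
  -- Step 2 : rewrite the integrand as Φ (x - α t • x₀)
  set Cst : ℝ := (2 * Real.pi) ^ (-(D : ℝ) / 2) * (σ t) ^ (-(D : ℝ)) with hCst
  set Φ : EuclideanSpace ℝ (Fin D) → ℝ := fun y =>
    Cst * Real.exp (-‖y‖ ^ 2 / (2 * (σ t) ^ 2)) *
      (deriv α t * (inner ℝ x₀ y : ℝ) / (σ t) ^ 2 + deriv σ t * ‖y‖ ^ 2 / (σ t) ^ 3
        - D * (deriv σ t / σ t)) ^ 2 with hΦ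
  have hpt : ∀ x, f t x * (deriv (fun s => Real.log (f s x)) t) ^ 2 = Φ (x - α t • x₀) := by
    intro x
    have e1 : (inner ℝ x₀ (x - α t • x₀) : ℝ) = (inner ℝ x₀ x : ℝ) - α t * ‖x₀‖ ^ 2 := by
      rw [inner_sub_right, real_inner_smul_right, real_inner_self_eq_norm_sq]
    have e2 : ‖x - α t • x₀‖ ^ 2 = ‖x‖ ^ 2 - 2 * α t * (inner ℝ x₀ x : ℝ) + (α t) ^ 2 * ‖x₀‖ ^ 2 :=
      hexpand x (α t)
    simp only [hΦ, hCst]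
    rw [hL x, hf, e1, e2]
  rw [show (fun x => f t x * (deriv (fun s => Real.log (f s x)) t) ^ 2)
      = fun x => Φ (x - α t • x₀) from funext hpt]
  rw [integral_sub_right_eq_self Φ (α t • x₀)]
  -- Step 3 : scaling
  have hscale : ∫ y, Φ y = (σ t) ^ D * ∫ z, Φ (σ t • z) := by
    rw [MeasureTheory.Measure.integral_comp_smul volume Φ (σ t), finrank_euclideanSpace_fin,
      abs_of_pos (by positivity), smul_eq_mul]
    field_simp
  rw [hscale]
  have hΦs : ∀ z : EuclideanSpace ℝ (Fin D), Φ (σ t • z)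
      = Cst * (Real.exp (-‖z‖ ^ 2 / 2) *
          ((deriv σ t / σ t) * (‖z‖ ^ 2 - D)
            + (deriv α t / σ t) * (inner ℝ x₀ z : ℝ)) ^ 2) := by
    intro z
    simp only [hΦ]
    have hn : ‖σ t • z‖ ^ 2 = (σ t) ^ 2 * ‖z‖ ^ 2 := by
      rw [norm_smul, mul_pow, Real.norm_eq_abs, sq_abs]
    have hi : (inner ℝ x₀ (σ t • z) : ℝ) = σ t * (inner ℝ x₀ z : ℝ) := real_inner_smul_right _ _ _
    rw [hn, hi]
    have harg : -((σ t) ^ 2 * ‖z‖ ^ 2) / (2 * (σ t) ^ 2) = -‖z‖ ^ 2 / 2 := by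
      field_simp
    rw [harg]
    have hbr : deriv α t * (σ t * (inner ℝ x₀ z : ℝ)) / (σ t) ^ 2
          + deriv σ t * ((σ t) ^ 2 * ‖z‖ ^ 2) / (σ t) ^ 3 - D * (deriv σ t / σ t)
        = (deriv σ t / σ t) * (‖z‖ ^ 2 - D) + (deriv α t / σ t) * (inner ℝ x₀ z : ℝ) := by
      field_simp
      ring
    rw [hbr]
    ring
  rw [show (fun z : EuclideanSpace ℝ (Fin D) => Φ (σ t • z))
      = fun z => Cst * (Real.exp (-‖z‖ ^ 2 / 2) *
          ((deriv σ t / σ t) * (‖z‖ ^ 2 - D)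
            + (deriv α t / σ t) * (inner ℝ x₀ z : ℝ)) ^ 2) from funext hΦs]
  rw [integral_const_mul, euclid_core D hD x₀ (deriv σ t / σ t) (deriv α t / σ t)]
  -- Step 4 : final arithmetic
  have h2π : (0:ℝ) < 2 * Real.pi := by positivity
  have hsq : Real.sqrt (2 * Real.pi) ^ D = (2 * Real.pi) ^ ((D : ℝ) / 2) := by
    rw [Real.sqrt_eq_rpow, ← Real.rpow_natCast ((2 * Real.pi) ^ ((1:ℝ)/2)) D,
      ← Real.rpow_mul h2π.le]
    congr 1
    ring
  have hpowD : (σ t) ^ D * (σ t) ^ (-(D : ℝ)) = 1 := by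
    rw [← Real.rpow_natCast (σ t) D, ← Real.rpow_add hs0]
    norm_num
  have hpow2π : (2 * Real.pi) ^ (-(D : ℝ) / 2) * (2 * Real.pi) ^ ((D : ℝ) / 2) = 1 := by
    rw [← Real.rpow_add h2π, show (-(D:ℝ)/2 + (D:ℝ)/2) = 0 by ring, Real.rpow_zero]
  rw [hCst, hsq]
  calc (σ t) ^ D * ((2 * Real.pi) ^ (-(D : ℝ) / 2) * (σ t) ^ (-(D : ℝ)) *
        ((2 * D * (deriv σ t / σ t) ^ 2 + (deriv α t / σ t) ^ 2 * ‖x₀‖ ^ 2) *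
          (2 * Real.pi) ^ ((D : ℝ) / 2)))
      = ((σ t) ^ D * (σ t) ^ (-(D : ℝ))) * ((2 * Real.pi) ^ (-(D : ℝ) / 2) *
          (2 * Real.pi) ^ ((D : ℝ) / 2)) *
          (2 * D * (deriv σ t / σ t) ^ 2 + (deriv α t / σ t) ^ 2 * ‖x₀‖ ^ 2) := by ring
    _ = 2 * D * (deriv σ t / σ t) ^ 2 + (deriv α t / σ t) ^ 2 * ‖x₀‖ ^ 2 := by
        rw [hpowD, hpow2π]; ring
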